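/- arXiv:1707.08736 — 2 statements merged into one kernel-verified Lean document; each statement's English description precedes it below -/
import Mathlib

section
/- Given a CGS-SPC G and its corresponding CGS-EPC G′, for every path λ of G, a sequence λ′ of states of G′ satisfying λ[k] = λ′[2k] ∩ Φ = λ′[2k+1] ∩ Φ for all k is a path of G′ if and only if for every k there exists a G-action α[k] with τ(λ[k], α[k]) = λ[k+1] such that λ′[2k+1] is obtained from λ′[2k] by the joint action (α′₁,…,α′ₙ, +turn) and λ′[2k+2] is obtained from λ′[2k+1] by the joint action (∅,…,∅, τ(λ′[2k+1] ∩ Φ, α[k])), where α′ᵢ = {c_{ip} | p ∈ α[k]ᵢ} and +turn denotes the action of agent * setting the state's Φ-part unchanged and turn true. -/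
open Set
open scoped Classical

structure CGS (Agent : Type) (Atom : Type) where
  ctrl : Agent → Set Atom
  d : Agent → Set Atom → Set (Set Atom)
  trans : Set Atom → (Agent → Set Atom) → Set Atom

namespace CGS

variable {Agent Atom : Type}

/-- Well-formedness: nonempty protocol, and actions only use controlled atoms. -/
def WF (G : CGS Agent Atom) : Prop :=
  (∀ i s, (G.d i s).Nonempty) ∧ (∀ i s a, a ∈ G.d i s → a ⊆ G.ctrl i)

/-- Exclusive propositional control: disjoint, complete, and the transition is union. -/
def IsEPC (G : CGS Agent Atom) : Prop :=
  Pairwise (fun i j => Disjoint (G.ctrl i) (G.ctrl j)) ∧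
  (⋃ i, G.ctrl i) = Set.univ ∧
  ∀ s α, G.trans s α = ⋃ i, α i

def Act (G : CGS Agent Atom) (s : Set Atom) : Set (Agent → Set Atom) :=
  {α | ∀ i, α i ∈ G.d i s}

def Succ (G : CGS Agent Atom) (s : Set Atom) : Set (Set Atom) :=
  {t | ∃ α ∈ G.Act s, G.trans s α = t}

def IsPath (G : CGS Agent Atom) (lam : ℕ → Set Atom) : Prop :=
  ∀ k, lam (k + 1) ∈ G.Succ (lam k)

def ValidStrat (G : CGS Agent Atom) (C : Set Agent)
    (σ : Agent → Set Atom → Set Atom) : Prop :=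
  ∀ i ∈ C, ∀ s, σ i s ∈ G.d i s

def out (G : CGS Agent Atom) (C : Set Agent)
    (σ : Agent → Set Atom → Set Atom) (s : Set Atom) : Set (ℕ → Set Atom) :=
  {lam | lam 0 = s ∧ ∀ k, ∃ α ∈ G.Act (lam k),
    (∀ i ∈ C, α i = σ i (lam k)) ∧ lam (k + 1) = G.trans (lam k) α}

end CGS

/-- ATL* (path) formulas. -/
inductive Form (Agent Atom : Type) : Type where
  | atom : Atom → Form Agent Atom
  | neg : Form Agent Atom → Form Agent Atom
  | disj : Form Agent Atom → Form Agent Atom → Form Agent Atom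
  | next : Form Agent Atom → Form Agent Atom
  | untl : Form Agent Atom → Form Agent Atom → Form Agent Atom
  | coal : Set Agent → Form Agent Atom → Form Agent Atom

namespace Form

def size {Agent Atom : Type} : Form Agent Atom → ℕ
  | atom _ => 1
  | neg φ => φ.size + 1
  | disj φ ψ => φ.size + ψ.size + 1
  | next φ => φ.size + 1
  | untl φ ψ => φ.size + ψ.size + 1
  | coal _ φ => φ.size + 1

end Form

/-- State formulas of ATL*. -/
inductive IsStateForm {Agent Atom : Type} : Form Agent Atom → Prop where
  | atom (p : Atom) : IsStateForm (.atom p)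
  | neg {φ} : IsStateForm φ → IsStateForm (.neg φ)
  | disj {φ ψ} : IsStateForm φ → IsStateForm ψ → IsStateForm (.disj φ ψ)
  | coal (C : Set Agent) (φ : Form Agent Atom) : IsStateForm (.coal C φ)

def shiftSeq {α : Type} (lam : ℕ → α) (n : ℕ) : ℕ → α := fun k => lam (k + n)

/-- Satisfaction of an ATL* path formula along a computation (memoryless strategies). -/
def psat {Agent Atom : Type} (G : CGS Agent Atom) :
    Form Agent Atom → (ℕ → Set Atom) → Prop
  | .atom p, lam => p ∈ lam 0
  | .neg φ, lam => ¬ psat G φ lam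
  | .disj φ ψ, lam => psat G φ lam ∨ psat G ψ lam
  | .next φ, lam => psat G φ (shiftSeq lam 1)
  | .untl φ ψ, lam => ∃ n, psat G ψ (shiftSeq lam n) ∧ ∀ m < n, psat G φ (shiftSeq lam m)
  | .coal C φ, lam => ∃ σ, G.ValidStrat C σ ∧ ∀ μ ∈ G.out C σ (lam 0), psat G φ μ

/-- Satisfaction of an ATL* state formula at a state. -/
def ssat {Agent Atom : Type} (G : CGS Agent Atom) (φ : Form Agent Atom)
    (s : Set Atom) : Prop :=
  psat G φ (fun _ => s)

/-- Atoms of the associated exclusive-control structure: Φ ∪ {turn} ∪ {c_{ip}}. -/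
abbrev Atom2 (Agent Atom : Type) : Type := Atom ⊕ (Unit ⊕ Agent × Atom)

/-- Agents of the associated exclusive-control structure: N ∪ {*}. -/
abbrev Agent2 (Agent : Type) : Type := Agent ⊕ Unit

def turnV {Agent Atom : Type} : Atom2 Agent Atom := Sum.inr (Sum.inl ())

def baseV {Agent Atom : Type} (p : Atom) : Atom2 Agent Atom := Sum.inl p

def cV {Agent Atom : Type} (i : Agent) (p : Atom) : Atom2 Agent Atom :=
  Sum.inr (Sum.inr (i, p))

/-- Restriction of a state of `G'` to the atoms of `G` (s' ∩ Φ). -/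
def restr {Agent Atom : Type} (s' : Set (Atom2 Agent Atom)) : Set Atom :=
  {p | baseV (Agent := Agent) p ∈ s'}

/-- Canonical state: agrees with `s` on Φ, all other variables false. -/
def canonical {Agent Atom : Type} (s : Set Atom) : Set (Atom2 Agent Atom) :=
  Sum.inl '' s

/-- Read off a `G`-joint action from the `c_{ip}` variables of a `G'`-state. -/
def readAct {Agent Atom : Type} (G : CGS Agent Atom) (s' : Set (Atom2 Agent Atom)) :
    Agent → Set Atom :=
  fun i => {p | p ∈ G.ctrl i ∧ cV i p ∈ s'}

/-- The CGS-EPC `G'` corresponding to a CGS-SPC `G` (Definition 5 of the paper). -/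
noncomputable def epcOf {Agent Atom : Type} (G : CGS Agent Atom) :
    CGS (Agent2 Agent) (Atom2 Agent Atom) where
  ctrl := fun j =>
    match j with
    | Sum.inl i => {q | ∃ p ∈ G.ctrl i, q = cV i p}
    | Sum.inr _ => insert turnV (Set.range (baseV (Agent := Agent) (Atom := Atom)))
  d := fun j s' =>
    match j with
    | Sum.inl i =>
        if turnV ∈ s' then {∅}
        else {a | ∃ α ∈ G.d i (restr s'), a = cV i '' α}
    | Sum.inr _ =>
        if turnV ∈ s' then {baseV '' G.trans (restr s') (readAct G s')}
        else {insert turnV (baseV '' restr s')}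
  trans := fun _ α => ⋃ j, α j

/-- Joint `G'`-action (α'₁,…,α'ₙ,+turn) encoding a `G`-action α at state s'. -/
def encAct {Agent Atom : Type} (_G : CGS Agent Atom) (s' : Set (Atom2 Agent Atom))
    (α : Agent → Set Atom) : Agent2 Agent → Set (Atom2 Agent Atom) :=
  fun j =>
    match j with
    | Sum.inl i => cV i '' α i
    | Sum.inr _ => insert turnV (baseV '' restr s')

/-- Joint `G'`-action (∅,…,∅, τ(s' ∩ Φ, α)) performing the aggregation. -/
def aggAct {Agent Atom : Type} (G : CGS Agent Atom) (s' : Set (Atom2 Agent Atom))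
    (α : Agent → Set Atom) : Agent2 Agent → Set (Atom2 Agent Atom) :=
  fun j =>
    match j with
    | Sum.inl _ => ∅
    | Sum.inr _ => baseV '' G.trans (restr s') α

/-- Projection Π of a `G'`-path to a `G`-path: λ[k] = λ'[2k] ∩ Φ. -/
def projPath {Agent Atom : Type} (lam' : ℕ → Set (Atom2 Agent Atom)) : ℕ → Set Atom :=
  fun k => restr (lam' (2 * k))

/-- Condition (†): λ[k] = λ'[2k] ∩ Φ = λ'[2k+1] ∩ Φ for all k. -/
def Corr {Agent Atom : Type} (lam : ℕ → Set Atom)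
    (lam' : ℕ → Set (Atom2 Agent Atom)) : Prop :=
  ∀ k, restr (lam' (2 * k)) = lam k ∧ restr (lam' (2 * k + 1)) = lam k

/-- Canonical `G'`-path associated to a `G`-path. -/
def CanonPath {Agent Atom : Type} (G : CGS Agent Atom) (lam : ℕ → Set Atom)
    (lam' : ℕ → Set (Atom2 Agent Atom)) : Prop :=
  (epcOf G).IsPath lam' ∧ lam' 0 = canonical (lam 0) ∧ Corr lam lam'

/-- The translation `tr`: replaces X by XX, commutes with everything else. -/
def trF {Agent Atom : Type} : Form Agent Atom → Form (Agent2 Agent) (Atom2 Agent Atom)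
  | .atom p => .atom (baseV p)
  | .neg φ => .neg (trF φ)
  | .disj φ ψ => .disj (trF φ) (trF ψ)
  | .next φ => .next (.next (trF φ))
  | .untl φ ψ => .untl (trF φ) (trF ψ)
  | .coal C φ => .coal (Sum.inl '' C) (trF φ)

/-!
Turn is false at `λ'[0]`, and an aggregation step always produces a state of the form
`baseV '' _`, so turn is false at every even position of a `G'`-path. At a state where turn is
false the protocol of `G'` forces the joint action to encode some `G`-action `α`; since `G` is
well formed, `α` can be read back from the `c_{ip}` variables of the resulting state, where turn
is true and the only joint action left is the aggregation of exactly that `α`.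
-/

section EpcOf

variable {Agent Atom : Type} (G : CGS Agent Atom)

@[simp]
theorem restr_image_baseV (t : Set Atom) : restr (Agent := Agent) (baseV '' t) = t := by
  ext p; simp [restr, baseV]

theorem turnV_notMem_image_baseV (t : Set Atom) : (turnV : Atom2 Agent Atom) ∉ baseV '' t := by
  simp [turnV, baseV]

theorem mem_act_epcOf_iff_of_turnV_notMem {s' : Set (Atom2 Agent Atom)} (hs : turnV ∉ s')
    {α' : Agent2 Agent → Set (Atom2 Agent Atom)} :
    α' ∈ (epcOf G).Act s' ↔
      ∃ α : Agent → Set Atom, (∀ i, α i ∈ G.d i (restr s')) ∧ α' = encAct G s' α := by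
  simp only [CGS.Act, Set.mem_ofPred_eq, Sum.forall, epcOf, if_neg hs]
  constructor
  · rintro ⟨hN, hstar⟩
    choose α hαd hαe using hN
    exact ⟨α, hαd, funext <| Sum.rec hαe fun _ => hstar _⟩
  · rintro ⟨α, hαd, rfl⟩
    exact ⟨fun i => ⟨α i, hαd i, rfl⟩, fun _ => rfl⟩

theorem mem_act_epcOf_iff_of_turnV_mem {t' : Set (Atom2 Agent Atom)} (ht : turnV ∈ t')
    {β : Agent2 Agent → Set (Atom2 Agent Atom)} :
    β ∈ (epcOf G).Act t' ↔ β = aggAct G t' (readAct G t') := by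
  simp only [CGS.Act, Set.mem_ofPred_eq, Sum.forall, epcOf, if_pos ht, Set.mem_singleton_iff]
  constructor
  · rintro ⟨hN, hstar⟩
    exact funext <| Sum.rec hN hstar
  · rintro rfl
    exact ⟨fun _ => rfl, fun _ => rfl⟩

theorem mem_trans_encAct {s' : Set (Atom2 Agent Atom)} {α : Agent → Set Atom}
    {x : Atom2 Agent Atom} :
    x ∈ (epcOf G).trans s' (encAct G s' α) ↔
      (∃ i, x ∈ cV i '' α i) ∨ x = turnV ∨ x ∈ baseV '' restr s' := by
  simp [epcOf, encAct]

theorem turnV_mem_trans_encAct (s' : Set (Atom2 Agent Atom)) (α : Agent → Set Atom) :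
    turnV ∈ (epcOf G).trans s' (encAct G s' α) :=
  (mem_trans_encAct G).2 (.inr (.inl rfl))

theorem readAct_trans_encAct {s' : Set (Atom2 Agent Atom)} {α : Agent → Set Atom}
    (hα : ∀ i, α i ⊆ G.ctrl i) :
    readAct G ((epcOf G).trans s' (encAct G s' α)) = α := by
  funext i
  ext p
  simp only [readAct, Set.mem_ofPred_eq, mem_trans_encAct]
  simpa [cV, turnV, baseV] using @hα i p

theorem trans_aggAct (t' : Set (Atom2 Agent Atom)) (α : Agent → Set Atom) :
    (epcOf G).trans t' (aggAct G t' α) = baseV '' G.trans (restr t') α := by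
  simp [epcOf, aggAct, Set.iUnion_sum, Set.iUnion_const]

theorem exists_encAct_aggAct_of_succ_succ (hWF : G.WF) {s' t' u' : Set (Atom2 Agent Atom)}
    (hs : turnV ∉ s') (hst : t' ∈ (epcOf G).Succ s') (htu : u' ∈ (epcOf G).Succ t') :
    ∃ α : Agent → Set Atom, (∀ i, α i ∈ G.d i (restr s')) ∧
      encAct G s' α ∈ (epcOf G).Act s' ∧ t' = (epcOf G).trans s' (encAct G s' α) ∧
      aggAct G t' α ∈ (epcOf G).Act t' ∧ u' = (epcOf G).trans t' (aggAct G t' α) := by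
  obtain ⟨α', hα', rfl⟩ := hst
  obtain ⟨α, hαd, rfl⟩ := (mem_act_epcOf_iff_of_turnV_notMem G hs).1 hα'
  have ht := turnV_mem_trans_encAct G s' α
  have hread := readAct_trans_encAct G (s' := s') fun i => hWF.2 i _ (α i) (hαd i)
  obtain ⟨β, hβ, rfl⟩ := htu
  rw [mem_act_epcOf_iff_of_turnV_mem G ht, hread] at hβ
  subst hβ
  exact ⟨α, hαd, hα', rfl, (mem_act_epcOf_iff_of_turnV_mem G ht).2 (by rw [hread]), rfl⟩

end EpcOf

theorem assoc_path_characterisation_general {Agent Atom : Type} (G : CGS Agent Atom)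
    (hWF : G.WF) (lam : ℕ → Set Atom)
    (lam' : ℕ → Set (Atom2 Agent Atom)) (hcorr : Corr lam lam')
    (hturn : turnV ∉ lam' 0) :
    (epcOf G).IsPath lam' ↔
      ∀ k, ∃ α : Agent → Set Atom,
        (∀ i, α i ∈ G.d i (lam k)) ∧ G.trans (lam k) α = lam (k + 1) ∧
        encAct G (lam' (2 * k)) α ∈ (epcOf G).Act (lam' (2 * k)) ∧
        lam' (2 * k + 1) = (epcOf G).trans (lam' (2 * k)) (encAct G (lam' (2 * k)) α) ∧
        aggAct G (lam' (2 * k + 1)) α ∈ (epcOf G).Act (lam' (2 * k + 1)) ∧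
        lam' (2 * k + 2) =
          (epcOf G).trans (lam' (2 * k + 1)) (aggAct G (lam' (2 * k + 1)) α) := by
  constructor
  · intro hpath
    have double_step k (hk : turnV ∉ lam' (2 * k)) :=
      exists_encAct_aggAct_of_succ_succ G hWF hk (hpath (2 * k)) (hpath (2 * k + 1))
    have hturn_even : ∀ k, turnV ∉ lam' (2 * k) := by
      intro k
      induction k with
      | zero => exact hturn
      | succ k ih =>
        obtain ⟨_, -, -, -, -, hu⟩ := double_step k ih
        rw [Nat.mul_succ, hu, trans_aggAct]
        exact turnV_notMem_image_baseV _
    intro k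
    obtain ⟨α, hαd, henc, ht, hagg, hu⟩ := double_step k (hturn_even k)
    refine ⟨α, (hcorr k).1 ▸ hαd, ?_, henc, ht, hagg, hu⟩
    rw [← (hcorr k).2, ← (hcorr (k + 1)).1, Nat.mul_succ, hu, trans_aggAct, restr_image_baseV]
  · intro h n
    obtain ⟨k, rfl | rfl⟩ := Nat.even_or_odd' n
    · obtain ⟨_, -, -, henc, ht, -⟩ := h k
      exact ⟨_, henc, ht.symm⟩
    · obtain ⟨_, -, -, -, -, hagg, hu⟩ := h k
      exact ⟨_, hagg, hu.symm⟩

/-- characterisation of associated `G'`-paths (Lemma 1.2):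
a sequence satisfying (†) is a path of `G'` iff every double step is
generated by encoding a `G`-action and then aggregating. -/
theorem assoc_path_characterisation {Agent Atom : Type} (G : CGS Agent Atom)
    (hWF : G.WF) (lam : ℕ → Set Atom) (hlam : G.IsPath lam)
    (lam' : ℕ → Set (Atom2 Agent Atom)) (hcorr : Corr lam lam')
    (hturn : turnV ∉ lam' 0) :
    (epcOf G).IsPath lam' ↔
      ∀ k, ∃ α : Agent → Set Atom,
        (∀ i, α i ∈ G.d i (lam k)) ∧ G.trans (lam k) α = lam (k + 1) ∧
        encAct G (lam' (2 * k)) α ∈ (epcOf G).Act (lam' (2 * k)) ∧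
        lam' (2 * k + 1) = (epcOf G).trans (lam' (2 * k)) (encAct G (lam' (2 * k)) α) ∧
        aggAct G (lam' (2 * k + 1)) α ∈ (epcOf G).Act (lam' (2 * k + 1)) ∧
        lam' (2 * k + 2) =
          (epcOf G).trans (lam' (2 * k + 1)) (aggAct G (lam' (2 * k + 1)) α) :=
  assoc_path_characterisation_general G hWF lam lam' hcorr hturn
end

section
/- Given a CGS-SPC G and its corresponding CGS-EPC G′, for every joint memoryless strategy σ_C of a coalition C ⊆ N in G there exists a joint memoryless strategy σ′_C in G′ such that for every state s of G, the projection Π(out(s′⋆, σ′_C)) = out(s, σ_C), where s′⋆ is the canonical state associated to s and Π maps each G′-path λ′ to the G-path λ with λ[k] = λ′[2k] ∩ Φ. -/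
open Set
open scoped Classical

/-! One round of `G` is simulated by two rounds of `G'`: first every agent writes its action
into its variables `c_{ip}` while `*` sets `turn`, then `*` reads the `c_{ip}` off, applies the
transition of `G` and clears everything else. Hence, under the lifted strategy, the states two
rounds after a canonical state are exactly the canonical images of the `σ`-successors in `G`.
Sampling a `G'`-outcome at even times therefore yields a `G`-outcome, and every `G`-outcome
arises this way by interleaving the intermediate states. -/

def pathsFrom {α : Type*} (R : α → α → Prop) (a : α) : Set (ℕ → α) :=
  {f | f 0 = a ∧ ∀ k, R (f k) (f (k + 1))}

theorem image_pathsFrom_eq_of_twoStep {α β : Type*}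
    {R : α → α → Prop} {S : β → β → Prop} {e : β → α} {p : α → β}
    (hpe : Function.LeftInverse p e)
    (hstep : ∀ b a, (∃ m, R (e b) m ∧ R m a) ↔ ∃ b', S b b' ∧ a = e b') (b : β) :
    (fun f k => p (f (2 * k))) '' pathsFrom R (e b) = pathsFrom S b := by
  ext g
  constructor
  · rintro ⟨f, ⟨hf0, hf⟩, rfl⟩
    have hnext : ∀ k, f (2 * k) = e (p (f (2 * k))) →
        S (p (f (2 * k))) (p (f (2 * (k + 1)))) ∧ f (2 * (k + 1)) = e (p (f (2 * (k + 1)))) := by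
      intro k hk
      obtain ⟨b', hS, he⟩ := (hstep _ (f (2 * k + 2))).mp ⟨f (2 * k + 1), hk ▸ hf _, hf _⟩
      rw [show 2 * (k + 1) = 2 * k + 2 by ring, he, hpe b']
      exact ⟨hS, rfl⟩
    have heven : ∀ k, f (2 * k) = e (p (f (2 * k))) := by
      intro k
      induction k with
      | zero => rw [Nat.mul_zero, hf0, hpe b]
      | succ k ih => exact (hnext k ih).2
    refine ⟨by simp only [Nat.mul_zero, hf0, hpe b], fun k => (hnext k (heven k)).1⟩
  · rintro ⟨hg0, hg⟩
    choose m hm₁ hm₂ using fun k => (hstep (g k) (e (g (k + 1)))).mpr ⟨g (k + 1), hg k, rfl⟩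
    let f : ℕ → α := fun n => if Even n then e (g (n / 2)) else m (n / 2)
    have hf_even : ∀ k, f (2 * k) = e (g k) := fun k => by simp [f]
    have hf_odd : ∀ k, f (2 * k + 1) = m k := fun k => by simp [f, Nat.add_div]
    refine ⟨f, ⟨by simpa [hg0] using hf_even 0, fun n => ?_⟩, funext fun k => by
      simp only [hf_even, hpe (g k)]⟩
    obtain ⟨k, rfl | rfl⟩ := Nat.even_or_odd' n
    · rw [hf_even, hf_odd]; exact hm₁ k
    · rw [hf_odd, show 2 * k + 1 + 1 = 2 * (k + 1) by ring, hf_even]; exact hm₂ k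

namespace CGS

variable {Agent Atom : Type}

def StratStep (G : CGS Agent Atom) (C : Set Agent) (σ : Agent → Set Atom → Set Atom)
    (s t : Set Atom) : Prop :=
  ∃ α ∈ G.Act s, (∀ i ∈ C, α i = σ i s) ∧ t = G.trans s α

theorem out_eq_pathsFrom (G : CGS Agent Atom) (C : Set Agent)
    (σ : Agent → Set Atom → Set Atom) (s : Set Atom) :
    G.out C σ s = pathsFrom (G.StratStep C σ) s :=
  rfl

end CGS

section Lift

variable {Agent Atom : Type}

theorem cV_injective (i : Agent) : Function.Injective (cV (Atom := Atom) i) := by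
  intro p q h
  simpa [cV] using h

theorem restr_canonical (s : Set Atom) : restr (Agent := Agent) (canonical s) = s := by
  ext p; simp [restr, canonical, baseV]

theorem turnV_not_mem_canonical (s : Set Atom) : turnV ∉ canonical (Agent := Agent) s := by
  simp [canonical, turnV]

/-- The state reached from the canonical state of `s` once the agents have announced `α`. -/
def midState (s : Set Atom) (α : Agent → Set Atom) : Set (Atom2 Agent Atom) :=
  insert turnV (baseV '' s) ∪ ⋃ i, cV i '' α i

theorem turnV_mem_midState (s : Set Atom) (α : Agent → Set Atom) : turnV ∈ midState s α := by
  simp [midState]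

theorem restr_midState (s : Set Atom) (α : Agent → Set Atom) : restr (midState s α) = s := by
  ext p
  simp [restr, midState, turnV, baseV, cV]

theorem readAct_midState (G : CGS Agent Atom) (s : Set Atom) (α : Agent → Set Atom)
    (hα : ∀ i, α i ⊆ G.ctrl i) : readAct G (midState s α) = α := by
  funext i; ext p
  have hcV : cV i p ∈ midState s α ↔ p ∈ α i := by
    simp [midState, cV, turnV, baseV, and_comm]
  change p ∈ G.ctrl i ∧ cV i p ∈ midState s α ↔ p ∈ α i
  rw [hcV]
  exact ⟨And.right, fun hp => ⟨hα i hp, hp⟩⟩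

theorem epcOf_trans (G : CGS Agent Atom) (s' : Set (Atom2 Agent Atom))
    (α' : Agent2 Agent → Set (Atom2 Agent Atom)) :
    (epcOf G).trans s' α' = (⋃ i, α' (Sum.inl i)) ∪ α' (Sum.inr ()) := by
  simp only [epcOf, Set.iUnion_sum]
  exact congrArg _ (iSup_unique _)

theorem epcOf_trans_encAct (G : CGS Agent Atom) (s' : Set (Atom2 Agent Atom))
    (α : Agent → Set Atom) :
    (epcOf G).trans s' (encAct G s' α) = midState (restr s') α := by
  rw [epcOf_trans, Set.union_comm]
  rfl

theorem epcOf_trans_aggAct (G : CGS Agent Atom) (s' : Set (Atom2 Agent Atom))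
    (α : Agent → Set Atom) :
    (epcOf G).trans s' (aggAct G s' α) = canonical (G.trans (restr s') α) := by
  rw [epcOf_trans]
  simp [aggAct, canonical]
  rfl

theorem epcOf_mem_act_of_turnV_not_mem (G : CGS Agent Atom) {s' : Set (Atom2 Agent Atom)}
    (h : turnV ∉ s') (α' : Agent2 Agent → Set (Atom2 Agent Atom)) :
    α' ∈ (epcOf G).Act s' ↔ ∃ α ∈ G.Act (restr s'), α' = encAct G s' α := by
  simp only [CGS.Act, Sum.forall, epcOf, if_neg h, Set.mem_singleton_iff]
  constructor
  · rintro ⟨hinl, hinr⟩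
    choose α hα hα' using hinl
    refine ⟨α, hα, funext (Sum.rec (fun i => hα' i) fun _ => hinr ())⟩
  · rintro ⟨α, hα, rfl⟩
    exact ⟨fun i => ⟨α i, hα i, rfl⟩, fun _ => rfl⟩

theorem epcOf_mem_act_of_turnV_mem (G : CGS Agent Atom) {s' : Set (Atom2 Agent Atom)}
    (h : turnV ∈ s') (α' : Agent2 Agent → Set (Atom2 Agent Atom)) :
    α' ∈ (epcOf G).Act s' ↔ α' = aggAct G s' (readAct G s') := by
  simp only [CGS.Act, epcOf, if_pos h, Set.mem_singleton_iff, funext_iff, Sum.forall]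
  rfl

def liftStrat (σ : Agent → Set Atom → Set Atom) :
    Agent2 Agent → Set (Atom2 Agent Atom) → Set (Atom2 Agent Atom)
  | Sum.inl i, s' => if turnV ∈ s' then ∅ else cV i '' σ i (restr s')
  | Sum.inr _, _ => ∅

theorem validStrat_liftStrat (G : CGS Agent Atom) {C : Set Agent}
    {σ : Agent → Set Atom → Set Atom} (hσ : G.ValidStrat C σ) :
    (epcOf G).ValidStrat (Sum.inl '' C) (liftStrat σ) := by
  rintro _ ⟨i, hi, rfl⟩ s'
  by_cases h : turnV ∈ s'
  · simp [liftStrat, epcOf, h]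
  · simpa [liftStrat, epcOf, h] using ⟨σ i (restr s'), hσ i hi _, rfl⟩

theorem stratStep_liftStrat_of_turnV_not_mem (G : CGS Agent Atom) (C : Set Agent)
    (σ : Agent → Set Atom → Set Atom) {s' : Set (Atom2 Agent Atom)} (h : turnV ∉ s')
    (t' : Set (Atom2 Agent Atom)) :
    (epcOf G).StratStep (Sum.inl '' C) (liftStrat σ) s' t' ↔
      ∃ α ∈ G.Act (restr s'), (∀ i ∈ C, α i = σ i (restr s')) ∧
        t' = midState (restr s') α := by
  have hagree : ∀ α : Agent → Set Atom, (∀ j ∈ Sum.inl '' C,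
      encAct G s' α j = liftStrat σ j s') ↔ ∀ i ∈ C, α i = σ i (restr s') := by
    intro α
    simp only [Set.forall_mem_image, encAct, liftStrat, if_neg h,
      (cV_injective _).image_injective.eq_iff]
  simp only [CGS.StratStep, epcOf_mem_act_of_turnV_not_mem G h]
  constructor
  · rintro ⟨_, ⟨α, hα, rfl⟩, hC, rfl⟩
    exact ⟨α, hα, (hagree α).mp hC, epcOf_trans_encAct G s' α⟩
  · rintro ⟨α, hα, hC, rfl⟩
    exact ⟨_, ⟨α, hα, rfl⟩, (hagree α).mpr hC, (epcOf_trans_encAct G s' α).symm⟩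

theorem stratStep_liftStrat_of_turnV_mem (G : CGS Agent Atom) (C : Set Agent)
    (σ : Agent → Set Atom → Set Atom) {s' : Set (Atom2 Agent Atom)} (h : turnV ∈ s')
    (t' : Set (Atom2 Agent Atom)) :
    (epcOf G).StratStep (Sum.inl '' C) (liftStrat σ) s' t' ↔
      t' = canonical (G.trans (restr s') (readAct G s')) := by
  simp only [CGS.StratStep, epcOf_mem_act_of_turnV_mem G h, exists_eq_left,
    epcOf_trans_aggAct, and_iff_right_iff_imp]
  rintro _ _ ⟨i, _, rfl⟩
  simp [aggAct, liftStrat, h]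

theorem stratStep_liftStrat_twice_canonical_iff (G : CGS Agent Atom)
    (hctrl : ∀ i s a, a ∈ G.d i s → a ⊆ G.ctrl i)
    (C : Set Agent) (σ : Agent → Set Atom → Set Atom) (s : Set Atom)
    (t' : Set (Atom2 Agent Atom)) :
    (∃ m, (epcOf G).StratStep (Sum.inl '' C) (liftStrat σ) (canonical s) m ∧
        (epcOf G).StratStep (Sum.inl '' C) (liftStrat σ) m t') ↔
      ∃ t, G.StratStep C σ s t ∧ t' = canonical t := by
  have hmid : ∀ α ∈ G.Act s, ∀ t', (epcOf G).StratStep (Sum.inl '' C) (liftStrat σ)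
      (midState s α) t' ↔ t' = canonical (G.trans s α) := fun α hα t' => by
    rw [stratStep_liftStrat_of_turnV_mem G C σ (turnV_mem_midState s α), restr_midState,
      readAct_midState G s α fun i => hctrl i s _ (hα i)]
  simp only [stratStep_liftStrat_of_turnV_not_mem G C σ (turnV_not_mem_canonical s),
    restr_canonical]
  constructor
  · rintro ⟨_, ⟨α, hα, hC, rfl⟩, hstep⟩
    exact ⟨_, ⟨α, hα, hC, rfl⟩, (hmid α hα t').mp hstep⟩
  · rintro ⟨_, ⟨α, hα, hC, rfl⟩, rfl⟩
    exact ⟨_, ⟨α, hα, hC, rfl⟩, (hmid α hα _).mpr rfl⟩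

end Lift

/-- Lemma 2.1: every joint strategy of `G` is simulated by one of `G'`:
the projections of the outcome paths from the canonical state coincide with the
outcomes in `G`. -/
theorem strategy_lift_to_epcOf {Agent Atom : Type} (G : CGS Agent Atom)
    (hWF : G.WF) (C : Set Agent) (σ : Agent → Set Atom → Set Atom)
    (hσ : G.ValidStrat C σ) :
    ∃ σ' : Agent2 Agent → Set (Atom2 Agent Atom) → Set (Atom2 Agent Atom),
      (epcOf G).ValidStrat (Sum.inl '' C) σ' ∧
      ∀ s : Set Atom,
        projPath '' ((epcOf G).out (Sum.inl '' C) σ' (canonical s)) =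
          G.out C σ s := by
  refine ⟨liftStrat σ, validStrat_liftStrat G hσ, fun s => ?_⟩
  rw [CGS.out_eq_pathsFrom, CGS.out_eq_pathsFrom]
  exact image_pathsFrom_eq_of_twoStep restr_canonical
    (stratStep_liftStrat_twice_canonical_iff G hWF.2 C σ) s
end
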